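/- The class of languages recognized by data automata with suffix-closed class automata (sDA) is closed under intersection: given two sDA D_1 and D_2, there is an sDA D with L(D) = L(D_1) ∩ L(D_2). -/

import Mathlib

/-- A data automaton over alphabet `Σ`, intermediate alphabet `Γ` and data
domain `Δ`, with base (transducer) states `Q` and class automaton states `S`. -/
structure DA (Sig Γ Δ : Type) (Q S : Type) where
  baseStep : Q → Sig → Set (Γ × Q)
  baseStart : Set Q
  baseAccept : Set Q
  classStep : S → Γ → Set S
  classStart : Set S
  classAccept : Set S

/-- An accepting run of the base transducer from state `q`, reading the input
word and producing the output word. -/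
def DA.BaseRun {Sig Γ Δ Q S : Type} (D : DA Sig Γ Δ Q S) :
    Q → List Sig → List Γ → Prop
  | q, [], [] => q ∈ D.baseAccept
  | q, a :: as, g :: gs => ∃ q', (g, q') ∈ D.baseStep q a ∧ D.BaseRun q' as gs
  | _, _, _ => False

/-- An accepting run of the class automaton from state `s` on a word. -/
def DA.ClassAccept {Sig Γ Δ Q S : Type} (D : DA Sig Γ Δ Q S) :
    S → List Γ → Prop
  | s, [] => s ∈ D.classAccept
  | s, g :: gs => ∃ s', s' ∈ D.classStep s g ∧ D.ClassAccept s' gs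

/-- The class string of data value `d`: the subsequence of the output `γ` at
the positions of `w` carrying data value `d`. -/
def classString {Sig Γ Δ : Type} [DecidableEq Δ]
    (γ : List Γ) (w : List (Sig × Δ)) (d : Δ) : List Γ :=
  ((γ.zip w).filter (fun p => p.2.2 = d)).map Prod.fst

/-- Acceptance of a data word by a data automaton: some accepting run of the
base transducer produces an output such that, for every data value occurring in
the word, the corresponding class string is accepted by the class automaton. -/
def DA.Accepts {Sig Γ Δ Q S : Type} [DecidableEq Δ] (D : DA Sig Γ Δ Q S)
    (w : List (Sig × Δ)) : Prop :=
  ∃ γ : List Γ, γ.length = w.length ∧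
    (∃ q ∈ D.baseStart, D.BaseRun q (w.map Prod.fst) γ) ∧
    ∀ d : Δ, (∃ p ∈ w, p.2 = d) →
      ∃ s ∈ D.classStart, D.ClassAccept s (classString γ w d)

/-- A data automaton is suffix-closed (an sDA) if all class states are initial. -/
def DA.IsSuffixClosed {Sig Γ Δ Q S : Type} (D : DA Sig Γ Δ Q S) : Prop :=
  D.classStart = Set.univ

/-!
Run the two data automata in lockstep: the product transducer outputs pairs, and since
taking class strings commutes with mapping the output, the class string of a paired output
is the pair of the two class strings, which the product class automaton checks componentwise.
Suffix-closedness survives the product because `univ ×ˢ univ = univ`.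
-/

theorem classString_map {Sig Γ Γ' Δ : Type} [DecidableEq Δ] (f : Γ → Γ')
    (γ : List Γ) (w : List (Sig × Δ)) (d : Δ) :
    classString (γ.map f) w d = (classString γ w d).map f := by
  simp [classString, List.zip_map_left, List.filter_map, Function.comp_def]

namespace DA

variable {Sig Γ₁ Γ₂ Δ Q₁ S₁ Q₂ S₂ : Type}

def prod (D₁ : DA Sig Γ₁ Δ Q₁ S₁) (D₂ : DA Sig Γ₂ Δ Q₂ S₂) :
    DA Sig (Γ₁ × Γ₂) Δ (Q₁ × Q₂) (S₁ × S₂) where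
  baseStep q a := {gq | (gq.1.1, gq.2.1) ∈ D₁.baseStep q.1 a ∧
                        (gq.1.2, gq.2.2) ∈ D₂.baseStep q.2 a}
  baseStart := D₁.baseStart ×ˢ D₂.baseStart
  baseAccept := D₁.baseAccept ×ˢ D₂.baseAccept
  classStep s g := D₁.classStep s.1 g.1 ×ˢ D₂.classStep s.2 g.2
  classStart := D₁.classStart ×ˢ D₂.classStart
  classAccept := D₁.classAccept ×ˢ D₂.classAccept

theorem IsSuffixClosed.prod {D₁ : DA Sig Γ₁ Δ Q₁ S₁} {D₂ : DA Sig Γ₂ Δ Q₂ S₂}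
    (h₁ : D₁.IsSuffixClosed) (h₂ : D₂.IsSuffixClosed) : (D₁.prod D₂).IsSuffixClosed :=
  (congrArg₂ (· ×ˢ ·) h₁ h₂).trans Set.univ_prod_univ

variable (D₁ : DA Sig Γ₁ Δ Q₁ S₁) (D₂ : DA Sig Γ₂ Δ Q₂ S₂)

theorem baseRun_prod :
    ∀ (q : Q₁ × Q₂) (as : List Sig) (γ : List (Γ₁ × Γ₂)),
      (D₁.prod D₂).BaseRun q as γ ↔
        D₁.BaseRun q.1 as (γ.map Prod.fst) ∧ D₂.BaseRun q.2 as (γ.map Prod.snd)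
  | q, [], [] => by simp [BaseRun, DA.prod]
  | q, [], _ :: _ => by simp [BaseRun]
  | q, _ :: _, [] => by simp [BaseRun]
  | q, a :: as, g :: gs => by
      simp only [BaseRun, List.map_cons]
      constructor
      · rintro ⟨q', ⟨h₁, h₂⟩, hrun⟩
        rw [baseRun_prod] at hrun
        exact ⟨⟨q'.1, h₁, hrun.1⟩, ⟨q'.2, h₂, hrun.2⟩⟩
      · rintro ⟨⟨q₁, h₁, hrun₁⟩, ⟨q₂, h₂, hrun₂⟩⟩
        exact ⟨(q₁, q₂), ⟨h₁, h₂⟩, (baseRun_prod (q₁, q₂) as gs).2 ⟨hrun₁, hrun₂⟩⟩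

theorem classAccept_prod :
    ∀ (s : S₁ × S₂) (gs : List (Γ₁ × Γ₂)),
      (D₁.prod D₂).ClassAccept s gs ↔
        D₁.ClassAccept s.1 (gs.map Prod.fst) ∧ D₂.ClassAccept s.2 (gs.map Prod.snd)
  | s, [] => by simp [ClassAccept, DA.prod]
  | s, g :: gs => by
      simp only [ClassAccept, List.map_cons]
      constructor
      · rintro ⟨s', ⟨h₁, h₂⟩, hacc⟩
        rw [classAccept_prod] at hacc
        exact ⟨⟨s'.1, h₁, hacc.1⟩, ⟨s'.2, h₂, hacc.2⟩⟩
      · rintro ⟨⟨s₁, h₁, hacc₁⟩, ⟨s₂, h₂, hacc₂⟩⟩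
        exact ⟨(s₁, s₂), ⟨h₁, h₂⟩, (classAccept_prod (s₁, s₂) gs).2 ⟨hacc₁, hacc₂⟩⟩

theorem accepts_prod [DecidableEq Δ] {w : List (Sig × Δ)} :
    (D₁.prod D₂).Accepts w ↔ D₁.Accepts w ∧ D₂.Accepts w := by
  constructor
  · rintro ⟨γ, hlen, ⟨q, hq, hrun⟩, hcls⟩
    rw [baseRun_prod] at hrun
    refine ⟨⟨γ.map Prod.fst, by simpa using hlen, ⟨q.1, hq.1, hrun.1⟩, fun d hd => ?_⟩,
      ⟨γ.map Prod.snd, by simpa using hlen, ⟨q.2, hq.2, hrun.2⟩, fun d hd => ?_⟩⟩ <;>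
    obtain ⟨s, hs, hacc⟩ := hcls d hd <;>
    rw [classAccept_prod] at hacc <;>
    rw [classString_map]
    exacts [⟨s.1, hs.1, hacc.1⟩, ⟨s.2, hs.2, hacc.2⟩]
  · rintro ⟨⟨γ₁, hlen₁, ⟨q₁, hq₁, hrun₁⟩, hcls₁⟩, ⟨γ₂, hlen₂, ⟨q₂, hq₂, hrun₂⟩, hcls₂⟩⟩
    have hfst : (γ₁.zip γ₂).map Prod.fst = γ₁ := List.map_fst_zip (by omega)
    have hsnd : (γ₁.zip γ₂).map Prod.snd = γ₂ := List.map_snd_zip (by omega)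
    refine ⟨γ₁.zip γ₂, by simp [hlen₁, hlen₂],
      ⟨(q₁, q₂), ⟨hq₁, hq₂⟩, (baseRun_prod D₁ D₂ _ _ _).2 ⟨by rwa [hfst], by rwa [hsnd]⟩⟩,
      fun d hd => ?_⟩
    obtain ⟨s₁, hs₁, hacc₁⟩ := hcls₁ d hd
    obtain ⟨s₂, hs₂, hacc₂⟩ := hcls₂ d hd
    refine ⟨(s₁, s₂), ⟨hs₁, hs₂⟩, (classAccept_prod D₁ D₂ _ _).2 ⟨?_, ?_⟩⟩
    · rwa [← classString_map, hfst]
    · rwa [← classString_map, hsnd]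

end DA

/-- The class of languages recognized by suffix-closed data automata is closed
under intersection. -/
theorem sDA_inter {Sig Γ₁ Γ₂ Δ Q₁ S₁ Q₂ S₂ : Type} [DecidableEq Δ]
    (D₁ : DA Sig Γ₁ Δ Q₁ S₁) (D₂ : DA Sig Γ₂ Δ Q₂ S₂)
    (h₁ : D₁.IsSuffixClosed) (h₂ : D₂.IsSuffixClosed) :
    ∃ (Γ Q S : Type) (D : DA Sig Γ Δ Q S), D.IsSuffixClosed ∧
      {w | D.Accepts w} = {w | D₁.Accepts w} ∩ {w | D₂.Accepts w} := by
  exact ⟨_, _, _, D₁.prod D₂, h₁.prod h₂, Set.ext fun _ => DA.accepts_prod D₁ D₂⟩
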